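/- Let Φ = {φ_1, ..., φ_{n+1}} be a full spark frame for ℝ^n. Then the set of full spark dual frames of Φ is open and dense in the set D_Φ of all dual frames of Φ (with the metric d(G,H) = Σ_i ‖g_i - h_i‖). -/

import Mathlib

/-! Full spark is an open condition: it is a finite conjunction of linear independence
conditions. For density: the dual frames of `φ` form an affine space containing a
full spark element, the canonical dual `S⁻¹ φ`, where the frame operator
`S = ∑ i, |φ i⟩⟨φ i|` is invertible because `φ` spans. On the line from any dual `g` to the
canonical dual, each `n × n` minor is a polynomial in the parameter which does not vanish at
the far endpoint, so all but finitely many points of the line, some of them arbitrarily close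
to `g`, are full spark duals. -/

variable {n m : ℕ}

/-- `ψ` is a dual frame of `φ` in `ℝ^n`. -/
def IsDualFrame (φ ψ : Fin m → EuclideanSpace ℝ (Fin n)) : Prop :=
  ∀ f : EuclideanSpace ℝ (Fin n), ∑ i, (inner ℝ (ψ i) f : ℝ) • φ i = f

/-- A family of vectors in `ℝ^n` is full spark if every `n` of its vectors are
linearly independent. -/
def FullSpark (φ : Fin m → EuclideanSpace ℝ (Fin n)) : Prop :=
  ∀ s : Finset (Fin m), s.card = n → LinearIndependent ℝ (fun i : s => φ i)

open Finset Filter Topology AffineMap InnerProductSpace Module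

section FrameOperator

variable {ι E : Type*} [Fintype ι] [NormedAddCommGroup E] [InnerProductSpace ℝ E]

noncomputable def frameOperator (φ : ι → E) : E →ₗ[ℝ] E :=
  ∑ i, (rankOne ℝ (φ i) (φ i)).toLinearMap

lemma frameOperator_apply (φ : ι → E) (f : E) :
    frameOperator φ f = ∑ i, ⟪φ i, f⟫_ℝ • φ i := by
  simp [frameOperator, LinearMap.sum_apply]

lemma isSymmetric_frameOperator (φ : ι → E) : (frameOperator φ).IsSymmetric :=
  LinearMap.isSymmetric_sum _ fun i _ => isSymmetric_rankOne_self (φ i)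

lemma inner_frameOperator_self (φ : ι → E) (f : E) :
    ⟪frameOperator φ f, f⟫_ℝ = ∑ i, ⟪φ i, f⟫_ℝ ^ 2 := by
  simp [frameOperator_apply, sum_inner, real_inner_smul_left, sq]

lemma frameOperator_injective {φ : ι → E} (hφ : Submodule.span ℝ (Set.range φ) = ⊤) :
    Function.Injective (frameOperator φ) := by
  rw [← LinearMap.ker_eq_bot, LinearMap.ker_eq_bot']
  intro f hf
  have hsum : ∑ i, ⟪φ i, f⟫_ℝ ^ 2 = 0 := by
    rw [← inner_frameOperator_self, hf, inner_zero_left]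
  have horth : innerₛₗ ℝ f = 0 := LinearMap.ext_on_range hφ fun i => by
    simpa [real_inner_comm] using
      (Finset.sum_eq_zero_iff_of_nonneg fun i _ => sq_nonneg _).mp hsum i (mem_univ i)
  simpa using LinearMap.congr_fun horth f

end FrameOperator

section LinearIndependentLineMap

variable {K M ι : Type*} [Field K] [AddCommGroup M] [Module K M] [Fintype ι]

lemma Matrix.finite_setOf_det_lineMap_eq_zero [DecidableEq ι] {A B : Matrix ι ι K}
    (hB : B.det ≠ 0) :
    {t : K | (lineMap A B t).det = 0}.Finite := by
  let p : Polynomial K :=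
    ((Polynomial.X : Polynomial K) • (B - A).map Polynomial.C + A.map Polynomial.C).det
  have hp : ∀ t : K, p.eval t = (lineMap A B t).det := fun t => by
    rw [← Polynomial.coe_evalRingHom, RingHom.map_det, lineMap_apply_module']
    congr 1
    ext i j
    simp
  have hp0 : p ≠ 0 := fun h => hB (by simpa [h] using (hp 1).symm)
  simpa [Polynomial.IsRoot, hp] using Polynomial.finite_setOfPred_isRoot hp0

lemma Module.Basis.linearIndependent_iff_det_ne_zero [DecidableEq ι] (b : Basis ι K M)
    {v : ι → M} :
    LinearIndependent K v ↔ b.det v ≠ 0 := by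
  have : FiniteDimensional K M := b.finiteDimensional_of_finite
  rw [← isUnit_iff_ne_zero, ← b.is_basis_iff_det]
  exact ⟨fun hv => ⟨hv, hv.span_eq_top_of_card_eq_finrank' (finrank_eq_card_basis b).symm⟩,
    And.left⟩

lemma LinearIndependent.finite_setOf_not_linearIndependent_lineMap [FiniteDimensional K M]
    {v w : ι → M} (hw : LinearIndependent K w) (hcard : Fintype.card ι = finrank K M) :
    {t : K | ¬LinearIndependent K (lineMap v w t)}.Finite := by
  classical
  let b := basisOfLinearIndependentOfCardEqFinrank' w hw hcard
  have hdet : ∀ u : ι → M, b.det u = (b.toMatrix u).det := b.det_apply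
  have htoMatrix (t : K) :
      b.toMatrix (lineMap v w t) = lineMap (b.toMatrix v) (b.toMatrix w) t := by
    ext i j; simp [Basis.toMatrix_apply, lineMap_apply_module, Matrix.smul_apply]
  have hw' : (b.toMatrix w).det ≠ 0 := by
    rw [← hdet]; exact (b.linearIndependent_iff_det_ne_zero).mp hw
  simpa [b.linearIndependent_iff_det_ne_zero, hdet, htoMatrix] using
    Matrix.finite_setOf_det_lineMap_eq_zero hw'

end LinearIndependentLineMap

lemma IsOpen.exists_pos_sum_norm_sub_lt_mem {ι E : Type*} [Fintype ι] [SeminormedAddCommGroup E]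
    {U : Set (ι → E)} (hU : IsOpen U) {g : ι → E} (hg : g ∈ U) :
    ∃ ε > 0, ∀ h : ι → E, ∑ i, ‖g i - h i‖ < ε → h ∈ U := by
  obtain ⟨ε, hε, hball⟩ := Metric.isOpen_iff.mp hU g hg
  refine ⟨ε, hε, fun h hh => hball ?_⟩
  rw [Metric.mem_ball, dist_comm, dist_pi_lt_iff hε]
  intro i
  rw [dist_eq_norm]
  exact (single_le_sum (fun i _ => norm_nonneg (g i - h i)) (mem_univ i)).trans_lt hh

lemma IsDualFrame.lineMap {φ g G : Fin m → EuclideanSpace ℝ (Fin n)}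
    (hg : IsDualFrame φ g) (hG : IsDualFrame φ G) (t : ℝ) :
    IsDualFrame φ (AffineMap.lineMap g G t) := by
  intro f
  simp only [AffineMap.lineMap_apply_module, Pi.add_apply, Pi.smul_apply, inner_add_left,
    real_inner_smul_left, add_smul, mul_smul, sum_add_distrib, ← smul_sum, hg f, hG f]
  module

lemma isDualFrame_frameOperator_symm {φ : Fin m → EuclideanSpace ℝ (Fin n)}
    (hφ : Submodule.span ℝ (Set.range φ) = ⊤) :
    IsDualFrame φ fun i =>
      (LinearEquiv.ofInjectiveEndo _ (frameOperator_injective hφ)).symm (φ i) := by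
  intro f
  set S := LinearEquiv.ofInjectiveEndo _ (frameOperator_injective hφ)
  have hS : S.symm.IsSymmetric := (isSymmetric_frameOperator φ).toLinearMap_symm (T := S)
  have hinner : ∀ i, ⟪S.symm (φ i), f⟫_ℝ = ⟪φ i, S.symm f⟫_ℝ := fun i => hS _ _
  simp only [hinner]
  exact (frameOperator_apply φ _).symm.trans (S.apply_symm_apply f)

lemma FullSpark.map_linearEquiv {φ : Fin m → EuclideanSpace ℝ (Fin n)} (hφ : FullSpark φ)
    (T : EuclideanSpace ℝ (Fin n) ≃ₗ[ℝ] EuclideanSpace ℝ (Fin n)) :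
    FullSpark fun i => T (φ i) :=
  fun s hs => (hφ s hs).map' T.toLinearMap T.ker

lemma exists_isDualFrame_fullSpark {φ : Fin m → EuclideanSpace ℝ (Fin n)}
    (hframe : Submodule.span ℝ (Set.range φ) = ⊤) (hfs : FullSpark φ) :
    ∃ G, IsDualFrame φ G ∧ FullSpark G :=
  ⟨_, isDualFrame_frameOperator_symm hframe, hfs.map_linearEquiv _⟩

lemma isOpen_setOf_fullSpark : IsOpen {g : Fin m → EuclideanSpace ℝ (Fin n) | FullSpark g} := by
  have hrestrict (s : Finset (Fin m)) :
      Continuous fun g : Fin m → EuclideanSpace ℝ (Fin n) => fun i : s => g i := by fun_prop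
  simp only [FullSpark, Set.ofPred_forall]
  exact isOpen_iInter_of_finite fun s => isOpen_iInter_of_finite fun _ =>
    isOpen_setOfPred_linearIndependent.preimage (hrestrict s)

lemma FullSpark.finite_setOf_not_fullSpark_lineMap {G : Fin m → EuclideanSpace ℝ (Fin n)}
    (hG : FullSpark G) (g : Fin m → EuclideanSpace ℝ (Fin n)) :
    {t : ℝ | ¬FullSpark (lineMap g G t)}.Finite := by
  have hrestrict (s : Finset (Fin m)) (t : ℝ) : (fun i : s => lineMap g G t i) =
      lineMap (fun i : s => g i) (fun i : s => G i) t := by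
    ext1 i; rw [pi_lineMap_apply, pi_lineMap_apply]
  have hbad : {t : ℝ | ¬FullSpark (lineMap g G t)} = ⋃ s ∈ {s : Finset (Fin m) | s.card = n},
      {t : ℝ | ¬LinearIndependent ℝ (lineMap (fun i : s => g i) (fun i : s => G i) t)} := by
    ext t
    simp only [Set.mem_ofPred_eq, FullSpark, hrestrict, not_forall, Set.mem_iUnion, exists_prop]
  rw [hbad]
  exact (Set.toFinite _).biUnion fun s hs =>
    (hG s hs).finite_setOf_not_linearIndependent_lineMap (by simpa using hs)

/-- for a full spark frame `φ` of `n+1` vectors in `ℝ^n`, the set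
of full spark dual frames is open and dense in the set of all dual frames
(metric `d(G,H) = ∑ i ‖g i - h i‖`). -/
theorem fullSparkDuals_open_dense
    (φ : Fin (n + 1) → EuclideanSpace ℝ (Fin n))
    (hframe : Submodule.span ℝ (Set.range φ) = ⊤)
    (hfs : FullSpark φ) :
    -- openness
    (∀ g : Fin (n + 1) → EuclideanSpace ℝ (Fin n),
      IsDualFrame φ g → FullSpark g →
        ∃ ε > 0, ∀ h : Fin (n + 1) → EuclideanSpace ℝ (Fin n),
          IsDualFrame φ h → (∑ i, ‖g i - h i‖) < ε → FullSpark h) ∧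
    -- density
    (∀ g : Fin (n + 1) → EuclideanSpace ℝ (Fin n),
      IsDualFrame φ g → ∀ ε > 0,
        ∃ h : Fin (n + 1) → EuclideanSpace ℝ (Fin n),
          IsDualFrame φ h ∧ FullSpark h ∧ (∑ i, ‖g i - h i‖) < ε) := by
  refine ⟨fun g _ hg => ?_, fun g hg ε hε => ?_⟩
  · obtain ⟨ε, hε, hU⟩ := isOpen_setOf_fullSpark.exists_pos_sum_norm_sub_lt_mem hg
    exact ⟨ε, hε, fun h _ => hU h⟩
  obtain ⟨G, hG, hGfs⟩ := exists_isDualFrame_fullSpark hframe hfs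
  have hspark : ∀ᶠ t in 𝓝[≠] (0 : ℝ), FullSpark (lineMap g G t) :=
    nhdsNE_le_cofinite 0 (eventually_cofinite.mpr (hGfs.finite_setOf_not_fullSpark_lineMap g))
  have hclose : ∀ᶠ t in 𝓝 (0 : ℝ), ∑ i, ‖g i - lineMap g G t i‖ < ε := by
    have hcont : Continuous fun t : ℝ => ∑ i, ‖g i - lineMap g G t i‖ := by fun_prop
    exact hcont.continuousAt.eventually_lt continuousAt_const (by simpa using hε)
  obtain ⟨t, hts, htc⟩ := (hspark.and (nhdsWithin_le_nhds hclose)).exists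
  exact ⟨_, hg.lineMap hG t, hts, htc⟩
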